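/- Let B be a Hermitian matrix, u a unit vector, and s = u + τ(I - uu*)t be such that the Rayleigh quotient ρ(s) of s is minimal over span{u, (I - uu*)t}. With J := (I - uu*)(B - ρ(s)I)(I - uu*), one has ⟨J(u - s), u - s⟩ = ρ(u) - ρ(s). -/

import Mathlib

open Matrix
open scoped ComplexConjugate

/-- Squared Euclidean norm of a complex vector. -/
noncomputable def nsq {k : ℕ} (x : Fin k → ℂ) : ℝ := ∑ i, ‖x i‖ ^ 2

/-- Standard Hermitian inner product (conjugate-linear in the first argument). -/
noncomputable def cip {k : ℕ} (x y : Fin k → ℂ) : ℂ := ∑ i, conj (x i) * y i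

/-- Orthogonal projection `(I - yy*) v`. -/
noncomputable def proj {k : ℕ} (y v : Fin k → ℂ) : Fin k → ℂ := v - cip y v • y

/-- Rayleigh quotient of a vector with respect to a (Hermitian) matrix. -/
noncomputable def rq {k : ℕ} (B : Matrix (Fin k) (Fin k) ℂ) (x : Fin k → ℂ) : ℝ :=
  (cip (B.mulVec x) x).re / nsq x

/-!
Put `C = B - ρ(s) I` and `q x = Re ⟨C x, x⟩`. By minimality of `ρ(s)`, `q` is nonnegative on
`span {u, w}`, and it vanishes at `s`; so `s` is a critical point of `q` on that span, i.e.
`Re ⟨C s, v⟩ = 0` for every `v` in it. For `v = u - s` this gives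
`q u = q s + 2 Re ⟨C s, u - s⟩ + q (u - s) = q (u - s)`. Since `u - s` is orthogonal to `u`, the
projections in `J` fix it, so `⟨J (u - s), u - s⟩ = q (u - s)`, while `q u = ρ(u) - ρ(s)`
because `‖u‖ = 1`.
-/

section

variable {k : ℕ}

lemma cip_eq_star_dotProduct (x y : Fin k → ℂ) : cip x y = star x ⬝ᵥ y := rfl

lemma cip_add_left (x y z : Fin k → ℂ) : cip (x + y) z = cip x z + cip y z := by
  simp only [cip_eq_star_dotProduct, star_add, add_dotProduct]

lemma cip_add_right (x y z : Fin k → ℂ) : cip x (y + z) = cip x y + cip x z := by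
  simp only [cip_eq_star_dotProduct, dotProduct_add]

lemma cip_smul_left (c : ℂ) (x y : Fin k → ℂ) : cip (c • x) y = conj c * cip x y := by
  simp only [cip_eq_star_dotProduct, star_smul, smul_dotProduct, smul_eq_mul]; rfl

lemma cip_smul_right (c : ℂ) (x y : Fin k → ℂ) : cip x (c • y) = c * cip x y := by
  simp only [cip_eq_star_dotProduct, dotProduct_smul, smul_eq_mul]

lemma cip_sub_right (x y z : Fin k → ℂ) : cip x (y - z) = cip x y - cip x z := by
  simp only [cip_eq_star_dotProduct, dotProduct_sub]

lemma conj_cip (x y : Fin k → ℂ) : conj (cip x y) = cip y x := by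
  rw [cip_eq_star_dotProduct, cip_eq_star_dotProduct, starRingEnd_apply, star_dotProduct,
    star_star, dotProduct_comm]

lemma cip_self (x : Fin k → ℂ) : cip x x = nsq x := by
  simp only [cip, nsq, Complex.ofReal_sum, Complex.ofReal_pow, Complex.conj_mul']

lemma nsq_pos {x : Fin k → ℂ} (hx : x ≠ 0) : 0 < nsq x := by
  obtain ⟨i, hi⟩ := Function.ne_iff.mp hx
  exact Finset.sum_pos' (fun j _ => by positivity)
    ⟨i, Finset.mem_univ i, pow_pos (norm_pos_iff.mpr hi) 2⟩

variable {C : Matrix (Fin k) (Fin k) ℂ}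

lemma cip_mulVec_left_of_isHermitian (hC : C.IsHermitian) (x y : Fin k → ℂ) :
    cip (C *ᵥ x) y = cip x (C *ᵥ y) := by
  rw [cip_eq_star_dotProduct, cip_eq_star_dotProduct, star_mulVec, hC.eq, dotProduct_mulVec]

lemma re_cip_mulVec_comm_of_isHermitian (hC : C.IsHermitian) (x y : Fin k → ℂ) :
    (cip (C *ᵥ x) y).re = (cip (C *ᵥ y) x).re := by
  rw [cip_mulVec_left_of_isHermitian hC, ← conj_cip, Complex.conj_re]

lemma cip_mulVec_self_of_isHermitian (hC : C.IsHermitian) (x : Fin k → ℂ) :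
    cip (C *ᵥ x) x = ((cip (C *ᵥ x) x).re : ℂ) :=
  (Complex.conj_eq_iff_re.mp (by rw [conj_cip, cip_mulVec_left_of_isHermitian hC])).symm

lemma re_cip_mulVec_add_self (hC : C.IsHermitian) (x y : Fin k → ℂ) :
    (cip (C *ᵥ (x + y)) (x + y)).re =
      (cip (C *ᵥ x) x).re + 2 * (cip (C *ᵥ x) y).re + (cip (C *ᵥ y) y).re := by
  rw [mulVec_add, cip_add_left, cip_add_right, cip_add_right, Complex.add_re, Complex.add_re,
    Complex.add_re, re_cip_mulVec_comm_of_isHermitian hC y x]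
  ring

lemma re_cip_mulVec_ofReal_smul_self (ε : ℝ) (x : Fin k → ℂ) :
    (cip (C *ᵥ ((ε : ℂ) • x)) ((ε : ℂ) • x)).re = ε ^ 2 * (cip (C *ᵥ x) x).re := by
  rw [mulVec_smul, cip_smul_left, cip_smul_right, Complex.conj_ofReal, ← mul_assoc,
    ← Complex.ofReal_mul, Complex.re_ofReal_mul, sq]

lemma re_cip_mulVec_eq_zero_of_nonneg (hC : C.IsHermitian) {x v : Fin k → ℂ}
    (hx : (cip (C *ᵥ x) x).re = 0)
    (hnonneg : ∀ ε : ℝ, 0 ≤ (cip (C *ᵥ (x + (ε : ℂ) • v)) (x + (ε : ℂ) • v)).re) :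
    (cip (C *ᵥ x) v).re = 0 := by
  have hdiscrim := discrim_le_zero (a := (cip (C *ᵥ v) v).re) (b := 2 * (cip (C *ᵥ x) v).re)
    (c := 0) fun ε => by
      have := hnonneg ε
      rw [re_cip_mulVec_add_self hC, hx, cip_smul_right, Complex.re_ofReal_mul,
        re_cip_mulVec_ofReal_smul_self] at this
      linarith
  rw [discrim] at hdiscrim
  nlinarith

lemma isHermitian_sub_ofReal_smul_one (hC : C.IsHermitian) (ρ : ℝ) :
    (C - (ρ : ℂ) • (1 : Matrix (Fin k) (Fin k) ℂ)).IsHermitian :=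
  hC.sub (isHermitian_one.smul (Complex.conj_ofReal ρ))

lemma re_cip_sub_ofReal_smul_one_mulVec_self (ρ : ℝ) (x : Fin k → ℂ) :
    (cip ((C - (ρ : ℂ) • 1) *ᵥ x) x).re = (cip (C *ᵥ x) x).re - ρ * nsq x := by
  rw [sub_mulVec, smul_mulVec, one_mulVec, cip_eq_star_dotProduct, star_sub, sub_dotProduct,
    ← cip_eq_star_dotProduct, ← cip_eq_star_dotProduct, cip_smul_left, cip_self,
    Complex.conj_ofReal, Complex.sub_re, ← Complex.ofReal_mul, Complex.ofReal_re]

lemma one_sub_vecMulVec_mulVec (u v : Fin k → ℂ) :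
    (1 - vecMulVec u (star u)) *ᵥ v = v - cip u v • u := by
  rw [sub_mulVec, one_mulVec, vecMulVec_mulVec, op_smul_eq_smul]
  rfl

lemma one_sub_vecMulVec_mulVec_of_cip_eq_zero {u v : Fin k → ℂ} (h : cip u v = 0) :
    (1 - vecMulVec u (star u)) *ᵥ v = v := by
  rw [one_sub_vecMulVec_mulVec, h, zero_smul, sub_zero]

lemma isHermitian_one_sub_vecMulVec_star (u : Fin k → ℂ) :
    (1 - vecMulVec u (star u)).IsHermitian :=
  isHermitian_one.sub (by rw [IsHermitian, conjTranspose_vecMulVec, star_star])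

end

theorem stmt4_general {k : ℕ} (B : Matrix (Fin k) (Fin k) ℂ) (hB : Bᴴ = B)
    (u t : Fin k → ℂ) (hu : nsq u = 1)
    (w : Fin k → ℂ) (hw : w = proj u t)
    (τ : ℂ)
    (s : Fin k → ℂ) (hs : s = u + τ • w)
    (hmin : ∀ a b : ℂ, a • u + b • w ≠ 0 → rq B s ≤ rq B (a • u + b • w))
    (J : Matrix (Fin k) (Fin k) ℂ)
    (hJ : J = (1 - vecMulVec u (star u)) * (B - ((rq B s : ℝ) : ℂ) • 1) *
      (1 - vecMulVec u (star u))) :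
    cip (J.mulVec (u - s)) (u - s) = ((rq B u - rq B s : ℝ) : ℂ) := by
  set ρ := rq B s with hρ
  set C := B - (ρ : ℂ) • (1 : Matrix (Fin k) (Fin k) ℂ)
  have hC : C.IsHermitian := isHermitian_sub_ofReal_smul_one hB ρ
  have huu : cip u u = 1 := by rw [cip_self, hu, Complex.ofReal_one]
  have huw : cip u w = 0 := by rw [hw, proj, cip_sub_right, cip_smul_right, huu, mul_one, sub_self]
  have hus : cip u s = 1 := by rw [hs, cip_add_right, cip_smul_right, huw, huu, mul_zero, add_zero]
  have hs_pos : 0 < nsq s := nsq_pos fun h => by simp [h, cip] at hus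
  have hCs : (cip (C *ᵥ s) s).re = 0 := by
    rw [re_cip_sub_ofReal_smul_one_mulVec_self, hρ, rq, div_mul_cancel₀ _ hs_pos.ne', sub_self]
  have hC_nonneg (a b : ℂ) : 0 ≤ (cip (C *ᵥ (a • u + b • w)) (a • u + b • w)).re := by
    by_cases hx : a • u + b • w = 0
    · simp [hx, cip]
    · rw [re_cip_sub_ofReal_smul_one_mulVec_self, sub_nonneg]
      exact (le_div_iff₀ (nsq_pos hx)).mp (hmin a b hx)
  have hstat : (cip (C *ᵥ s) (u - s)).re = 0 := by
    refine re_cip_mulVec_eq_zero_of_nonneg hC hCs fun ε => ?_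
    have hspan : s + (ε : ℂ) • (u - s) = (1 : ℂ) • u + ((1 - ε) * τ) • w := by rw [hs]; module
    exact hspan ▸ hC_nonneg _ _
  have hCu : (cip (C *ᵥ u) u).re = (cip (C *ᵥ (u - s)) (u - s)).re := by
    have := re_cip_mulVec_add_self hC s (u - s)
    rw [add_sub_cancel, hCs, hstat] at this
    linarith
  have hu_s : cip u (u - s) = 0 := by rw [cip_sub_right, huu, hus, sub_self]
  rw [hJ, ← mulVec_mulVec, ← mulVec_mulVec, one_sub_vecMulVec_mulVec_of_cip_eq_zero hu_s,
    cip_mulVec_left_of_isHermitian (isHermitian_one_sub_vecMulVec_star u),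
    one_sub_vecMulVec_mulVec_of_cip_eq_zero hu_s, cip_mulVec_self_of_isHermitian hC, ← hCu,
    re_cip_sub_ofReal_smul_one_mulVec_self, hu, rq, hu, div_one, mul_one]

theorem stmt4 {k : ℕ} (B : Matrix (Fin k) (Fin k) ℂ) (hB : Bᴴ = B)
    (u t : Fin k → ℂ) (hu : nsq u = 1)
    (w : Fin k → ℂ) (hw : w = proj u t)
    (τ : ℂ) (hτ : τ ≠ 0)
    (s : Fin k → ℂ) (hs : s = u + τ • w)
    (hmin : ∀ a b : ℂ, a • u + b • w ≠ 0 → rq B s ≤ rq B (a • u + b • w))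
    (J : Matrix (Fin k) (Fin k) ℂ)
    (hJ : J = (1 - vecMulVec u (star u)) * (B - ((rq B s : ℝ) : ℂ) • 1) *
      (1 - vecMulVec u (star u))) :
    cip (J.mulVec (u - s)) (u - s) = ((rq B u - rq B s : ℝ) : ℂ) :=
  stmt4_general B hB u t hu w hw τ s hs hmin J hJ
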